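/- arXiv:1304.4685 — 2 statements merged into one kernel-verified Lean document; each statement's English description precedes it below -/
import Mathlib

section
/- Let θ ∈ (0,1), let (x,y,z,λ,γ) ∈ N₂(θ) with duality gap μ > 0, let first- and second-derivative directions be given, and let μ(α) be the duality gap of the arc point. Then: (i) if ẍᵀHẍ ≤ nμ, then μ(α) ≤ μ for every α ∈ [0,π/2]; (ii) if ẍᵀHẍ > nμ, then setting g = (nμ/(ẍᵀHẍ) + √((nμ/(ẍᵀHẍ))² + (1/3)³))^{1/3} + (nμ/(ẍᵀHẍ) − √((nμ/(ẍᵀHẍ))² + (1/3)³))^{1/3} (real cube roots), one has g ∈ (0,1) and μ(α) ≤ μ for every α ∈ [0,π/2] with sinα ≤ g. -/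
open scoped BigOperators

noncomputable section

/-- Euclidean dot product of two vectors. -/
def dotp {ι : Type*} [Fintype ι] (u v : ι → ℝ) : ℝ := ∑ i, u i * v i

/-- Euclidean norm of a vector. -/
def eucNorm {ι : Type*} [Fintype ι] (u : ι → ℝ) : ℝ := Real.sqrt (∑ i, (u i) ^ 2)

/-- Strict feasibility for the box-constrained QP KKT system. -/
def StrictlyFeasible {n : ℕ} (H : Matrix (Fin n) (Fin n) ℝ)
    (c x y z lam gam : Fin n → ℝ) : Prop :=
  H.mulVec x + c + lam - gam = 0 ∧
  x + y = (fun _ => 1) ∧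
  x - z = (fun _ => -1) ∧
  (∀ i, 0 < y i) ∧ (∀ i, 0 < z i) ∧ (∀ i, 0 < lam i) ∧ (∀ i, 0 < gam i)

/-- The central-path neighborhood `N₂(θ)`. -/
def N2 {n : ℕ} (H : Matrix (Fin n) (Fin n) ℝ) (c : Fin n → ℝ) (θ : ℝ)
    (x y z lam gam : Fin n → ℝ) : Prop :=
  StrictlyFeasible H c x y z lam gam ∧
  eucNorm (Sum.elim y z * Sum.elim lam gam
      - fun _ => dotp (Sum.elim y z) (Sum.elim lam gam) / (2 * (n : ℝ)))
    ≤ θ * (dotp (Sum.elim y z) (Sum.elim lam gam) / (2 * (n : ℝ)))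

/-- First-derivative direction of the arc at a point `(x,y,z,λ,γ)`. -/
def FirstDir {n : ℕ} (H : Matrix (Fin n) (Fin n) ℝ)
    (y z lam gam xd yd zd ld gd : Fin n → ℝ) : Prop :=
  H.mulVec xd + ld - gd = 0 ∧ yd = -xd ∧ zd = xd ∧
  lam * yd + y * ld = lam * y ∧ gam * zd + z * gd = gam * z

/-- Second-derivative direction of the arc at a point `(x,y,z,λ,γ)`. -/
def SecondDir {n : ℕ} (H : Matrix (Fin n) (Fin n) ℝ)
    (y z lam gam yd zd ld gd xdd ydd zdd ldd gdd : Fin n → ℝ) : Prop :=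
  H.mulVec xdd + ldd - gdd = 0 ∧ ydd = -xdd ∧ zdd = xdd ∧
  lam * ydd + y * ldd = (-2 : ℝ) • (ld * yd) ∧
  gam * zdd + z * gdd = (-2 : ℝ) • (gd * zd)

/-- The ellipse (arc) approximation point: `v(α) = v - v̇·sin α + v̈·(1 - cos α)`. -/
def arc {n : ℕ} (v vd vdd : Fin n → ℝ) (α : ℝ) : Fin n → ℝ :=
  v - Real.sin α • vd + (1 - Real.cos α) • vdd

/-- Corrector (centering) direction at a point `(x,y,z,λ,γ)` with target `μ`. -/
def CorrDir {n : ℕ} (H : Matrix (Fin n) (Fin n) ℝ)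
    (y z lam gam dx dy dz dl dg : Fin n → ℝ) (mu : ℝ) : Prop :=
  H.mulVec dx + dl - dg = 0 ∧ dy = -dx ∧ dz = dx ∧
  lam * dy + y * dl = (fun _ => mu) - lam * y ∧
  gam * dz + z * dg = (fun _ => mu) - gam * z

/-- Real cube root. -/
def cbrt (t : ℝ) : ℝ := if t < 0 then -((-t) ^ ((1 : ℝ) / 3)) else t ^ ((1 : ℝ) / 3)

/-
The duality gap along the arc is a trigonometric polynomial in `α`. Writing `s = sin α`
and `t = 1 - cos α`, the first-derivative equations turn the linear part into `(1 - s) pᵀω`;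
the second-derivative equations, `s² - 2t = -t²`, `Hẋ = γ̇ - λ̇` and `Hẍ = γ̈ - λ̈` turn the
quadratic part into `(s² + t²) ẍᵀHẍ - wᵀHw` with `w = t ẋ + s ẍ`. Since `H ⪰ 0` and
`t ≤ s²` on `[0, π/2]`, the gap does not increase as long as `ẍᵀHẍ (s + s³) ≤ 2nμ`.
This holds on the whole quarter period when `ẍᵀHẍ ≤ nμ`; otherwise `s ↦ s + s³` is
increasing and `g` is, by Cardano's formula, the root of `g + g³ = 2nμ / ẍᵀHẍ`.
-/

open Real Set Matrix

lemma cbrt_pow_three (t : ℝ) : cbrt t ^ 3 = t := by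
  unfold cbrt
  split_ifs with h
  · rw [Odd.neg_pow (by decide), ← Real.rpow_natCast, ← Real.rpow_mul (by linarith)]
    norm_num
  · rw [← Real.rpow_natCast, ← Real.rpow_mul (by linarith)]
    norm_num

lemma cbrt_eq_of_pow_three_eq {s t : ℝ} (h : s ^ 3 = t) : cbrt t = s :=
  (Odd.strictMono_pow (R := ℝ) (by decide : Odd 3)).injective
    (by simp only [cbrt_pow_three, h])

lemma cbrt_mul (u v : ℝ) : cbrt (u * v) = cbrt u * cbrt v :=
  cbrt_eq_of_pow_three_eq (by rw [mul_pow, cbrt_pow_three, cbrt_pow_three])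

theorem cardano_formula {p q g : ℝ} (h : 0 ≤ q ^ 2 + p ^ 3)
    (hg : g = cbrt (q + √(q ^ 2 + p ^ 3)) + cbrt (q - √(q ^ 2 + p ^ 3))) :
    g ^ 3 + 3 * p * g = 2 * q := by
  set r := √(q ^ 2 + p ^ 3)
  have hr : r ^ 2 = q ^ 2 + p ^ 3 := Real.sq_sqrt h
  have hprod : cbrt (q + r) * cbrt (q - r) = -p := by
    rw [← cbrt_mul]
    exact cbrt_eq_of_pow_three_eq (by linear_combination hr)
  subst hg
  linear_combination cbrt_pow_three (q + r) + cbrt_pow_three (q - r)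
    + 3 * (cbrt (q + r) + cbrt (q - r)) * hprod

lemma mem_Ioo_of_pow_three_add_self_eq {g q : ℝ} (h : g ^ 3 + g = 2 * q) (hq₀ : 0 < q)
    (hq₁ : q < 1) : g ∈ Ioo 0 1 := by
  constructor
  · by_contra! hg
    nlinarith [pow_two_nonneg g]
  · by_contra! hg
    nlinarith [one_le_pow₀ (n := 3) hg]

lemma one_sub_cos_le_sin_sq {α : ℝ} (hα : 0 ≤ cos α) : 1 - cos α ≤ sin α ^ 2 := by
  nlinarith [sin_sq_add_cos_sq α, cos_le_one α]

section Arc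

variable {n : ℕ}

lemma dotp_eq_dotProduct (u v : Fin n → ℝ) : dotp u v = u ⬝ᵥ v := rfl

lemma dotp_sum_elim (u v w r : Fin n → ℝ) :
    dotp (Sum.elim u v) (Sum.elim w r) = dotp u w + dotp v r := by
  simp [dotp, Fintype.sum_sum_type]

lemma dotp_mulVec_self_nonneg {H : Matrix (Fin n) (Fin n) ℝ} (hH : H.PosSemidef)
    (v : Fin n → ℝ) : 0 ≤ dotp v (H *ᵥ v) := by
  simpa [dotp_eq_dotProduct] using hH.dotProduct_mulVec_nonneg v

lemma dotp_add_smul_mulVec (H : Matrix (Fin n) (Fin n) ℝ) (u v : Fin n → ℝ) (a b : ℝ) :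
    dotp (a • u + b • v) (H *ᵥ (a • u + b • v)) = a ^ 2 * dotp u (H *ᵥ u)
      + a * b * (dotp u (H *ᵥ v) + dotp v (H *ᵥ u)) + b ^ 2 * dotp v (H *ᵥ v) := by
  simp only [dotp_eq_dotProduct, mulVec_add, mulVec_smul, dotProduct_add,
    add_dotProduct, dotProduct_smul, smul_dotProduct, smul_eq_mul]
  ring

lemma dotp_neg_add_dotp_of_mulVec_add_sub_eq_zero {H : Matrix (Fin n) (Fin n) ℝ}
    {v l k : Fin n → ℝ} (h : H *ᵥ v + l - k = 0) (u : Fin n → ℝ) :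
    dotp (-u) l + dotp u k = dotp u (H *ᵥ v) := by
  obtain rfl : k = H *ᵥ v + l := (sub_eq_zero.mp h).symm
  simp only [dotp_eq_dotProduct, neg_dotProduct, dotProduct_add]
  ring

lemma dotp_arc_arc {y yd ydd l ld ldd : Fin n → ℝ} (h₁ : l * yd + y * ld = l * y)
    (h₂ : l * ydd + y * ldd = (-2 : ℝ) • (ld * yd)) (α : ℝ) :
    dotp (arc y yd ydd α) (arc l ld ldd α) = (1 - sin α) * dotp y l
      - (1 - cos α) ^ 2 * dotp yd ld - sin α * (1 - cos α) * (dotp yd ldd + dotp ydd ld)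
      + (1 - cos α) ^ 2 * dotp ydd ldd := by
  have hpt : ∀ i, arc y yd ydd α i * arc l ld ldd α i = (1 - sin α) * (y i * l i)
      - (1 - cos α) ^ 2 * (yd i * ld i) - sin α * (1 - cos α) * (yd i * ldd i + ydd i * ld i)
      + (1 - cos α) ^ 2 * (ydd i * ldd i) := by
    intro i
    have e₁ := congrFun h₁ i
    have e₂ := congrFun h₂ i
    simp only [Pi.add_apply, Pi.mul_apply, Pi.smul_apply, smul_eq_mul] at e₁ e₂
    simp only [arc, Pi.add_apply, Pi.sub_apply, Pi.smul_apply, smul_eq_mul]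
    linear_combination (-sin α) * e₁ + (1 - cos α) * e₂
      + yd i * ld i * sin_sq_add_cos_sq α
  simp only [dotp, hpt, Finset.sum_add_distrib, Finset.sum_sub_distrib, ← Finset.mul_sum]

variable {H : Matrix (Fin n) (Fin n) ℝ}
  {y z lam gam xd yd zd ld gd xdd ydd zdd ldd gdd : Fin n → ℝ}

theorem dotp_arc_eq_of_dir (hfd : FirstDir H y z lam gam xd yd zd ld gd)
    (hsd : SecondDir H y z lam gam yd zd ld gd xdd ydd zdd ldd gdd) (α : ℝ) :
    dotp (Sum.elim (arc y yd ydd α) (arc z zd zdd α))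
        (Sum.elim (arc lam ld ldd α) (arc gam gd gdd α))
      = (1 - sin α) * dotp (Sum.elim y z) (Sum.elim lam gam)
        - dotp ((1 - cos α) • xd + sin α • xdd) (H *ᵥ ((1 - cos α) • xd + sin α • xdd))
        + (sin α ^ 2 + (1 - cos α) ^ 2) * dotp xdd (H *ᵥ xdd) := by
  obtain ⟨hH₁, rfl, hzd, hy₁, hz₁⟩ := hfd
  obtain ⟨hH₂, rfl, hzdd, hy₂, hz₂⟩ := hsd
  subst zd zdd
  have e₁₁ := dotp_neg_add_dotp_of_mulVec_add_sub_eq_zero hH₁ xd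
  have e₁₂ := dotp_neg_add_dotp_of_mulVec_add_sub_eq_zero hH₂ xd
  have e₂₁ := dotp_neg_add_dotp_of_mulVec_add_sub_eq_zero hH₁ xdd
  have e₂₂ := dotp_neg_add_dotp_of_mulVec_add_sub_eq_zero hH₂ xdd
  rw [dotp_sum_elim, dotp_sum_elim, dotp_arc_arc hy₁ hy₂, dotp_arc_arc hz₁ hz₂,
    dotp_add_smul_mulVec]
  linear_combination (-(1 - cos α) ^ 2) * e₁₁ - sin α * (1 - cos α) * (e₁₂ + e₂₁)
    + (1 - cos α) ^ 2 * e₂₂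

theorem dotp_arc_le_of_dir (hH : H.PosSemidef) (hfd : FirstDir H y z lam gam xd yd zd ld gd)
    (hsd : SecondDir H y z lam gam yd zd ld gd xdd ydd zdd ldd gdd) {α : ℝ}
    (hα : α ∈ Icc 0 (π / 2))
    (h : dotp xdd (H *ᵥ xdd) * (sin α + sin α ^ 3) ≤ dotp (Sum.elim y z) (Sum.elim lam gam)) :
    dotp (Sum.elim (arc y yd ydd α) (arc z zd zdd α))
        (Sum.elim (arc lam ld ldd α) (arc gam gd gdd α))
      ≤ dotp (Sum.elim y z) (Sum.elim lam gam) := by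
  rw [dotp_arc_eq_of_dir hfd hsd]
  have hs : 0 ≤ sin α :=
    sin_nonneg_of_mem_Icc (Icc_subset_Icc_right (by linarith [pi_pos]) hα)
  have hc : 0 ≤ cos α := cos_nonneg_of_mem_Icc ⟨by linarith [hα.1, pi_pos], hα.2⟩
  have ht : (1 - cos α) ^ 2 ≤ sin α ^ 4 := by
    rw [show sin α ^ 4 = (sin α ^ 2) ^ 2 by ring]
    exact pow_le_pow_left₀ (by linarith [cos_le_one α]) (one_sub_cos_le_sin_sq hc) 2
  linarith [mul_le_mul_of_nonneg_left h hs,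
    mul_le_mul_of_nonneg_left ht (dotp_mulVec_self_nonneg hH xdd),
    dotp_mulVec_self_nonneg hH ((1 - cos α) • xd + sin α • xdd)]

end Arc

theorem stmt_9_general {n : ℕ} (hn : 0 < n) (H : Matrix (Fin n) (Fin n) ℝ) (hH : H.PosDef)
    (y z lam gam : Fin n → ℝ)
    (xd yd zd ld gd : Fin n → ℝ)
    (hfd : FirstDir H y z lam gam xd yd zd ld gd)
    (xdd ydd zdd ldd gdd : Fin n → ℝ)
    (hsd : SecondDir H y z lam gam yd zd ld gd xdd ydd zdd ldd gdd)
    (μ : ℝ)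
    (hμ : μ = dotp (Sum.elim y z) (Sum.elim lam gam) / (2 * (n : ℝ)))
    (hμpos : 0 < μ)
    (muA : ℝ → ℝ)
    (hmuA : ∀ α : ℝ, muA α = dotp (Sum.elim (arc y yd ydd α) (arc z zd zdd α))
        (Sum.elim (arc lam ld ldd α) (arc gam gd gdd α)) / (2 * (n : ℝ)))
    (g : ℝ)
    (hg : g = cbrt ((n : ℝ) * μ / dotp xdd (H.mulVec xdd)
          + Real.sqrt (((n : ℝ) * μ / dotp xdd (H.mulVec xdd)) ^ 2
              + ((1 : ℝ) / 3) ^ 3))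
        + cbrt ((n : ℝ) * μ / dotp xdd (H.mulVec xdd)
          - Real.sqrt (((n : ℝ) * μ / dotp xdd (H.mulVec xdd)) ^ 2
              + ((1 : ℝ) / 3) ^ 3))) :
    (dotp xdd (H.mulVec xdd) ≤ (n : ℝ) * μ →
      ∀ α ∈ Set.Icc (0 : ℝ) (Real.pi / 2), muA α ≤ μ) ∧
    ((n : ℝ) * μ < dotp xdd (H.mulVec xdd) →
      g ∈ Set.Ioo (0 : ℝ) 1 ∧
      ∀ α ∈ Set.Icc (0 : ℝ) (Real.pi / 2), Real.sin α ≤ g → muA α ≤ μ) := by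
  set Q := dotp xdd (H *ᵥ xdd)
  have hn' : (0 : ℝ) < n := Nat.cast_pos.mpr hn
  have hgap : ∀ α ∈ Icc 0 (π / 2), Q * (sin α + sin α ^ 3) ≤ 2 * n * μ → muA α ≤ μ := by
    intro α hα h
    have hD : dotp (Sum.elim y z) (Sum.elim lam gam) = 2 * n * μ := by
      rw [hμ]; field_simp
    rw [hmuA, hμ]
    gcongr
    exact dotp_arc_le_of_dir hH.posSemidef hfd hsd hα (hD ▸ h)
  have hs : ∀ α ∈ Icc 0 (π / 2), 0 ≤ sin α := fun α hα =>
    sin_nonneg_of_mem_Icc (Icc_subset_Icc_right (by linarith [pi_pos]) hα)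
  refine ⟨fun hle α hα => hgap α hα ?_, fun hgt => ?_⟩
  · have h₁ : sin α + sin α ^ 3 ≤ 2 := by
      linarith [sin_le_one α, pow_le_one₀ (n := 3) (hs α hα) (sin_le_one α)]
    calc Q * (sin α + sin α ^ 3) ≤ n * μ * (sin α + sin α ^ 3) := by
          gcongr
          exact add_nonneg (hs α hα) (pow_nonneg (hs α hα) 3)
      _ ≤ n * μ * 2 := by gcongr
      _ = 2 * n * μ := by ring
  have hQ : 0 < Q := lt_trans (by positivity) hgt
  have hroot : g ^ 3 + g = 2 * (n * μ / Q) := by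
    simpa using cardano_formula (p := 1 / 3) (by positivity) hg
  refine ⟨mem_Ioo_of_pow_three_add_self_eq hroot (by positivity) ((div_lt_one hQ).mpr hgt),
    fun α hα hsg => hgap α hα ?_⟩
  have h₃ : sin α ^ 3 ≤ g ^ 3 := pow_le_pow_left₀ (hs α hα) hsg 3
  calc Q * (sin α + sin α ^ 3) ≤ Q * (g ^ 3 + g) :=
        mul_le_mul_of_nonneg_left (by linarith) hQ.le
    _ = 2 * n * μ := by rw [hroot]; field_simp

/-- if `ẍᵀHẍ ≤ nμ` then `μ(α) ≤ μ` on all of `[0,π/2]`; otherwise the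
Cardano root `g` lies in `(0,1)` and `μ(α) ≤ μ` whenever `sin α ≤ g`. -/
theorem stmt_9 {n : ℕ} (hn : 0 < n) (H : Matrix (Fin n) (Fin n) ℝ) (hH : H.PosDef)
    (c x y z lam gam : Fin n → ℝ)
    (θ : ℝ) (hθ : θ ∈ Set.Ioo (0 : ℝ) 1)
    (hN : N2 H c θ x y z lam gam)
    (xd yd zd ld gd : Fin n → ℝ)
    (hfd : FirstDir H y z lam gam xd yd zd ld gd)
    (xdd ydd zdd ldd gdd : Fin n → ℝ)
    (hsd : SecondDir H y z lam gam yd zd ld gd xdd ydd zdd ldd gdd)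
    (μ : ℝ)
    (hμ : μ = dotp (Sum.elim y z) (Sum.elim lam gam) / (2 * (n : ℝ)))
    (hμpos : 0 < μ)
    (muA : ℝ → ℝ)
    (hmuA : ∀ α : ℝ, muA α = dotp (Sum.elim (arc y yd ydd α) (arc z zd zdd α))
        (Sum.elim (arc lam ld ldd α) (arc gam gd gdd α)) / (2 * (n : ℝ)))
    (g : ℝ)
    (hg : g = cbrt ((n : ℝ) * μ / dotp xdd (H.mulVec xdd)
          + Real.sqrt (((n : ℝ) * μ / dotp xdd (H.mulVec xdd)) ^ 2
              + ((1 : ℝ) / 3) ^ 3))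
        + cbrt ((n : ℝ) * μ / dotp xdd (H.mulVec xdd)
          - Real.sqrt (((n : ℝ) * μ / dotp xdd (H.mulVec xdd)) ^ 2
              + ((1 : ℝ) / 3) ^ 3))) :
    (dotp xdd (H.mulVec xdd) ≤ (n : ℝ) * μ →
      ∀ α ∈ Set.Icc (0 : ℝ) (Real.pi / 2), muA α ≤ μ) ∧
    ((n : ℝ) * μ < dotp xdd (H.mulVec xdd) →
      g ∈ Set.Ioo (0 : ℝ) 1 ∧
      ∀ α ∈ Set.Icc (0 : ℝ) (Real.pi / 2), Real.sin α ≤ g → muA α ≤ μ) :=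
  stmt_9_general hn H hH y z lam gam xd yd zd ld gd hfd xdd ydd zdd ldd gdd hsd μ hμ hμpos muA hmuA
    g hg

end
end

section
/- Let θ ∈ (0,1), let (x,y,z,λ,γ) ∈ N₂(θ) with duality gap μ, and let first- and second-derivative directions be given. Then: (i) ‖ṗ∘ω̇‖ ≤ ((1+θ)/(1−θ))·nμ; (ii) ‖p̈∘ω̈‖ ≤ (2(1+θ)²/(1−θ)³)·n²μ; (iii) ‖p̈∘ω̇‖ ≤ (2√2·(1+θ)^{3/2}/(1−θ)²)·n^{3/2}μ; (iv) ‖ṗ∘ω̈‖ ≤ (2√2·(1+θ)^{3/2}/(1−θ)²)·n^{3/2}μ. -/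
open scoped BigOperators

noncomputable section

/-!
Scale both Newton systems by `D = diag √(p/ω)`. If `ω ∘ u + p ∘ v = r` and `uᵀv ≥ 0`, then
`‖D⁻¹u‖² + ‖Dv‖² = ‖r/√(p∘ω)‖² - 2uᵀv ≤ ‖r/√(p∘ω)‖²`, while `‖u ∘ v‖ ≤ ‖D⁻¹u‖‖Dv‖`, so
`‖u ∘ v‖ ≤ ‖r/√(p∘ω)‖²/2`. Positive definiteness of `H` makes `ṗᵀω̇ = ẋᵀHẋ` and `p̈ᵀω̈ = ẍᵀHẍ`
nonnegative. The first system has `r = p∘ω`, whence `‖D⁻¹ṗ‖² + ‖Dω̇‖² ≤ pᵀω = 2nμ`; the second has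
`r = -2ṗ∘ω̇`, and since `p_i ω_i ≥ (1-θ)μ` in `N₂(θ)` this gives `‖D⁻¹p̈‖² + ‖Dω̈‖² ≤ 4n²μ/(1-θ)`.
Multiplying these bounds pairwise yields (i)–(iv).
-/

open Finset

section ScaledNewton

variable {ι : Type*} [Fintype ι]

lemma eucNorm_nonneg (u : ι → ℝ) : 0 ≤ eucNorm u := Real.sqrt_nonneg _

lemma eucNorm_sq (u : ι → ℝ) : eucNorm u ^ 2 = ∑ i, u i ^ 2 :=
  Real.sq_sqrt (sum_nonneg fun _ _ => sq_nonneg _)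

lemma abs_le_eucNorm (u : ι → ℝ) (i : ι) : |u i| ≤ eucNorm u :=
  Real.abs_le_sqrt (single_le_sum (fun j _ => sq_nonneg (u j)) (mem_univ i))

lemma dotp_pos [Nonempty ι] {p w : ι → ℝ} (hp : ∀ i, 0 < p i) (hw : ∀ i, 0 < w i) :
    0 < dotp p w :=
  sum_pos (fun i _ => mul_pos (hp i) (hw i)) univ_nonempty

lemma sum_mul_le_sum_mul_sum {a b : ι → ℝ} (ha : ∀ i, 0 ≤ a i) (hb : ∀ i, 0 ≤ b i) :
    ∑ i, a i * b i ≤ (∑ i, a i) * ∑ i, b i := by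
  rw [sum_mul]
  exact sum_le_sum fun i _ =>
    mul_le_mul_of_nonneg_left (single_le_sum (fun j _ => hb j) (mem_univ i)) (ha i)

lemma sum_sq_div_le {q r : ι → ℝ} {m : ℝ} (hm : 0 < m) (hq : ∀ i, m ≤ q i) :
    ∑ i, r i ^ 2 / q i ≤ eucNorm r ^ 2 / m := by
  rw [eucNorm_sq, sum_div]
  exact sum_le_sum fun i _ => div_le_div_of_nonneg_left (sq_nonneg _) hm (hq i)

/-- `‖D⁻¹u‖²` for the scaling `D = diag √(p/w)`; `scaledNormSq w p v` is `‖Dv‖²`. -/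
def scaledNormSq (p w u : ι → ℝ) : ℝ := ∑ i, u i ^ 2 * w i / p i

variable {p w : ι → ℝ}

lemma scaledNormSq_nonneg (hp : ∀ i, 0 < p i) (hw : ∀ i, 0 < w i) (u : ι → ℝ) :
    0 ≤ scaledNormSq p w u :=
  sum_nonneg fun i _ => div_nonneg (mul_nonneg (sq_nonneg _) (hw i).le) (hp i).le

lemma scaledNormSq_add_le {u v r : ι → ℝ} (hp : ∀ i, 0 < p i) (hw : ∀ i, 0 < w i)
    (hr : w * u + p * v = r) (huv : 0 ≤ dotp u v) :
    scaledNormSq p w u + scaledNormSq w p v ≤ ∑ i, r i ^ 2 / (p i * w i) := by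
  have hsplit : ∑ i, r i ^ 2 / (p i * w i)
      = scaledNormSq p w u + scaledNormSq w p v + 2 * dotp u v := by
    simp only [scaledNormSq, dotp, mul_sum, ← sum_add_distrib, ← hr]
    refine sum_congr rfl fun i _ => ?_
    simp only [Pi.add_apply, Pi.mul_apply]
    field_simp [(hp i).ne', (hw i).ne']
    ring
  linarith

lemma eucNorm_mul_sq_le (hp : ∀ i, 0 < p i) (hw : ∀ i, 0 < w i) (u v : ι → ℝ) :
    eucNorm (u * v) ^ 2 ≤ scaledNormSq p w u * scaledNormSq w p v := by
  rw [eucNorm_sq]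
  calc ∑ i, (u * v) i ^ 2 = ∑ i, (u i ^ 2 * w i / p i) * (v i ^ 2 * p i / w i) :=
        sum_congr rfl fun i _ => by
          simp only [Pi.mul_apply]
          field_simp [(hp i).ne', (hw i).ne']
    _ ≤ scaledNormSq p w u * scaledNormSq w p v :=
        sum_mul_le_sum_mul_sum
          (fun i => div_nonneg (mul_nonneg (sq_nonneg _) (hw i).le) (hp i).le)
          (fun i => div_nonneg (mul_nonneg (sq_nonneg _) (hp i).le) (hw i).le)

lemma eucNorm_mul_le_of_scaledNormSq_add_le {u v : ι → ℝ} {B : ℝ} (hp : ∀ i, 0 < p i)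
    (hw : ∀ i, 0 < w i) (hB : scaledNormSq p w u + scaledNormSq w p v ≤ B) :
    eucNorm (u * v) ≤ B / 2 := by
  have ha := scaledNormSq_nonneg hp hw u
  have hb := scaledNormSq_nonneg hw hp v
  rw [← sq_le_sq₀ (eucNorm_nonneg _) (by linarith)]
  calc eucNorm (u * v) ^ 2 ≤ scaledNormSq p w u * scaledNormSq w p v :=
        eucNorm_mul_sq_le hp hw u v
    _ ≤ ((scaledNormSq p w u + scaledNormSq w p v) / 2) ^ 2 := by
        nlinarith [sq_nonneg (scaledNormSq p w u - scaledNormSq w p v)]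
    _ ≤ (B / 2) ^ 2 := by gcongr

end ScaledNewton

section ArcDerivatives

variable {ι : Type*} [Fintype ι] {p w pd wd pdd wdd : ι → ℝ} {m : ℝ}

lemma scaledNormSq_first_le (hp : ∀ i, 0 < p i) (hw : ∀ i, 0 < w i)
    (h1 : w * pd + p * wd = p * w) (h1' : 0 ≤ dotp pd wd) :
    scaledNormSq p w pd + scaledNormSq w p wd ≤ dotp p w := by
  have hr : ∑ i, (p * w) i ^ 2 / (p i * w i) = dotp p w :=
    sum_congr rfl fun i _ => by
      simp only [Pi.mul_apply]
      field_simp [(hp i).ne', (hw i).ne']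
  exact hr ▸ scaledNormSq_add_le hp hw h1 h1'

lemma scaledNormSq_second_le (hp : ∀ i, 0 < p i) (hw : ∀ i, 0 < w i) (hm : 0 < m)
    (hlow : ∀ i, m ≤ p i * w i)
    (h2 : w * pdd + p * wdd = (-2 : ℝ) • (pd * wd)) (h2' : 0 ≤ dotp pdd wdd) :
    scaledNormSq p w pdd + scaledNormSq w p wdd ≤ 4 * eucNorm (pd * wd) ^ 2 / m := by
  calc _ ≤ ∑ i, ((-2 : ℝ) • (pd * wd)) i ^ 2 / (p i * w i) := scaledNormSq_add_le hp hw h2 h2'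
    _ ≤ eucNorm ((-2 : ℝ) • (pd * wd)) ^ 2 / m := sum_sq_div_le hm hlow
    _ = 4 * eucNorm (pd * wd) ^ 2 / m := by
        simp only [eucNorm_sq, Pi.smul_apply, smul_eq_mul, mul_pow, ← mul_sum]
        norm_num

theorem arc_derivative_bounds (hp : ∀ i, 0 < p i) (hw : ∀ i, 0 < w i) (hm : 0 < m)
    (hlow : ∀ i, m ≤ p i * w i)
    (h1 : w * pd + p * wd = p * w) (h1' : 0 ≤ dotp pd wd)
    (h2 : w * pdd + p * wdd = (-2 : ℝ) • (pd * wd)) (h2' : 0 ≤ dotp pdd wdd) :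
    eucNorm (pd * wd) ≤ dotp p w / 2 ∧ eucNorm (pdd * wdd) ≤ dotp p w ^ 2 / (2 * m) ∧
      eucNorm (pdd * wd) ^ 2 ≤ dotp p w ^ 3 / m ∧ eucNorm (pd * wdd) ^ 2 ≤ dotp p w ^ 3 / m := by
  have hfirst := scaledNormSq_first_le hp hw h1 h1'
  have hi := eucNorm_mul_le_of_scaledNormSq_add_le hp hw hfirst
  have hsecond : scaledNormSq p w pdd + scaledNormSq w p wdd ≤ dotp p w ^ 2 / m :=
    calc _ ≤ 4 * eucNorm (pd * wd) ^ 2 / m := scaledNormSq_second_le hp hw hm hlow h2 h2'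
      _ ≤ 4 * (dotp p w / 2) ^ 2 / m := by gcongr; exact eucNorm_nonneg _
      _ = dotp p w ^ 2 / m := by ring
  have hii := eucNorm_mul_le_of_scaledNormSq_add_le hp hw hsecond
  have := scaledNormSq_nonneg hp hw pd
  have := scaledNormSq_nonneg hw hp wd
  have := scaledNormSq_nonneg hp hw pdd
  have := scaledNormSq_nonneg hw hp wdd
  refine ⟨hi, hii.trans_eq (by ring), ?_, ?_⟩
  · calc _ ≤ scaledNormSq p w pdd * scaledNormSq w p wd := eucNorm_mul_sq_le hp hw pdd wd
      _ ≤ dotp p w ^ 2 / m * dotp p w := by gcongr <;> linarith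
      _ = dotp p w ^ 3 / m := by ring
  · calc _ ≤ scaledNormSq p w pd * scaledNormSq w p wdd := eucNorm_mul_sq_le hp hw pd wdd
      _ ≤ dotp p w * (dotp p w ^ 2 / m) := by gcongr <;> linarith
      _ = dotp p w ^ 3 / m := by ring

end ArcDerivatives

lemma dotp_elim_nonneg_of_mulVec {κ : Type*} [Fintype κ] {H : Matrix κ κ ℝ} (hH : H.PosSemidef)
    {u l g : κ → ℝ} (h : H.mulVec u + l - g = 0) : 0 ≤ dotp (Sum.elim (-u) u) (Sum.elim l g) := by
  have hg : g = H.mulVec u + l := (sub_eq_zero.1 h).symm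
  have hquad : dotp (Sum.elim (-u) u) (Sum.elim l g) = dotProduct u (H.mulVec u) := by
    simp only [dotp, Fintype.sum_sum_type, Sum.elim_inl, Sum.elim_inr, hg, dotProduct,
      Pi.neg_apply, Pi.add_apply, neg_mul, mul_add, sum_neg_distrib, sum_add_distrib]
    ring
  simpa [hquad] using hH.dotProduct_mulVec_nonneg u

section BoxQP

variable {n : ℕ} {H : Matrix (Fin n) (Fin n) ℝ} {c x y z lam gam : Fin n → ℝ} {θ : ℝ}

lemma N2.elim_pos (h : N2 H c θ x y z lam gam) :
    (∀ i, 0 < Sum.elim y z i) ∧ ∀ i, 0 < Sum.elim lam gam i := by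
  obtain ⟨⟨-, -, -, hy, hz, hl, hg⟩, -⟩ := h
  exact ⟨Sum.forall.2 ⟨hy, hz⟩, Sum.forall.2 ⟨hl, hg⟩⟩

lemma N2.le_mul (h : N2 H c θ x y z lam gam) (i : Fin n ⊕ Fin n) :
    (1 - θ) * (dotp (Sum.elim y z) (Sum.elim lam gam) / (2 * n))
      ≤ Sum.elim y z i * Sum.elim lam gam i := by
  have hi := (abs_le_eucNorm _ i).trans h.2
  simp only [Pi.sub_apply, Pi.mul_apply] at hi
  linarith [(abs_le.1 hi).1]

variable {xd yd zd ld gd xdd ydd zdd ldd gdd : Fin n → ℝ}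

lemma FirstDir.newton (h : FirstDir H y z lam gam xd yd zd ld gd) :
    Sum.elim lam gam * Sum.elim yd zd + Sum.elim y z * Sum.elim ld gd
      = Sum.elim y z * Sum.elim lam gam := by
  ext (i | i)
  · simpa [mul_comm] using congrFun h.2.2.2.1 i
  · simpa [mul_comm] using congrFun h.2.2.2.2 i

lemma FirstDir.dotp_nonneg (hH : H.PosSemidef) (h : FirstDir H y z lam gam xd yd zd ld gd) :
    0 ≤ dotp (Sum.elim yd zd) (Sum.elim ld gd) := by
  obtain ⟨hx, rfl, rfl, -, -⟩ := h
  exact dotp_elim_nonneg_of_mulVec hH hx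

lemma SecondDir.newton (h : SecondDir H y z lam gam yd zd ld gd xdd ydd zdd ldd gdd) :
    Sum.elim lam gam * Sum.elim ydd zdd + Sum.elim y z * Sum.elim ldd gdd
      = (-2 : ℝ) • (Sum.elim yd zd * Sum.elim ld gd) := by
  ext (i | i)
  · simpa [mul_comm] using congrFun h.2.2.2.1 i
  · simpa [mul_comm] using congrFun h.2.2.2.2 i

lemma SecondDir.dotp_nonneg (hH : H.PosSemidef)
    (h : SecondDir H y z lam gam yd zd ld gd xdd ydd zdd ldd gdd) :
    0 ≤ dotp (Sum.elim ydd zdd) (Sum.elim ldd gdd) := by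
  obtain ⟨hx, rfl, rfl, -, -⟩ := h
  exact dotp_elim_nonneg_of_mulVec hH hx

end BoxQP

section Constants

variable {θ : ℝ}

lemma le_mul_one_add_div_one_sub_pow {c : ℝ} (hc : 0 ≤ c) (hθ0 : 0 ≤ θ) (hθ1 : θ < 1) (k : ℕ) :
    c ≤ c * ((1 + θ) / (1 - θ)) ^ k :=
  le_mul_of_one_le_right hc (one_le_pow₀ ((one_le_div (sub_pos.2 hθ1)).2 (by linarith)))

lemma rpow_three_halves_sq {x : ℝ} (hx : 0 ≤ x) : (x ^ ((3 : ℝ) / 2)) ^ 2 = x ^ 3 := by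
  rw [← Real.rpow_natCast _ 2, ← Real.rpow_mul hx]
  norm_num

lemma le_three_halves_bound {e N μ : ℝ} (he : 0 ≤ e) (hN : 0 ≤ N) (hμ : 0 < μ) (hθ0 : 0 ≤ θ)
    (hθ1 : θ < 1) (h : e ^ 2 ≤ (2 * N * μ) ^ 3 / ((1 - θ) * μ)) :
    e ≤ (2 * √2 * (1 + θ) ^ ((3 : ℝ) / 2) / (1 - θ) ^ 2) * N ^ ((3 : ℝ) / 2) * μ := by
  have hθ' : 0 < 1 - θ := sub_pos.2 hθ1
  have hT : 0 ≤ (2 * √2 * (1 + θ) ^ ((3 : ℝ) / 2) / (1 - θ) ^ 2) * N ^ ((3 : ℝ) / 2) * μ := by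
    have := Real.rpow_nonneg (show 0 ≤ 1 + θ by linarith) ((3 : ℝ) / 2)
    have := Real.rpow_nonneg hN ((3 : ℝ) / 2)
    positivity
  rw [← sq_le_sq₀ he hT]
  calc e ^ 2 ≤ (2 * N * μ) ^ 3 / ((1 - θ) * μ) := h
    _ = 8 * N ^ 3 * μ ^ 2 / (1 - θ) := by field_simp; ring
    _ ≤ 8 * N ^ 3 * μ ^ 2 / (1 - θ) * ((1 + θ) / (1 - θ)) ^ 3 :=
        le_mul_one_add_div_one_sub_pow (div_nonneg (by positivity) hθ'.le) hθ0 hθ1 3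
    _ = _ := by
        simp only [mul_pow, div_pow]
        rw [rpow_three_halves_sq (by linarith), rpow_three_halves_sq hN,
          Real.sq_sqrt zero_le_two]
        field_simp
        ring

end Constants

/-- norm bounds on the Hadamard products of the derivative vectors. -/
theorem stmt_11 {n : ℕ} (hn : 0 < n) (H : Matrix (Fin n) (Fin n) ℝ) (hH : H.PosDef)
    (c x y z lam gam : Fin n → ℝ)
    (θ : ℝ) (hθ : θ ∈ Set.Ioo (0 : ℝ) 1)
    (hN : N2 H c θ x y z lam gam)
    (xd yd zd ld gd : Fin n → ℝ)
    (hfd : FirstDir H y z lam gam xd yd zd ld gd)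
    (xdd ydd zdd ldd gdd : Fin n → ℝ)
    (hsd : SecondDir H y z lam gam yd zd ld gd xdd ydd zdd ldd gdd)
    (p w pd wd pdd wdd : Fin n ⊕ Fin n → ℝ)
    (hp : p = Sum.elim y z) (hw : w = Sum.elim lam gam)
    (hpd : pd = Sum.elim yd zd) (hwd : wd = Sum.elim ld gd)
    (hpdd : pdd = Sum.elim ydd zdd) (hwdd : wdd = Sum.elim ldd gdd)
    (μ : ℝ) (hμ : μ = dotp p w / (2 * (n : ℝ))) :
    eucNorm (pd * wd) ≤ ((1 + θ) / (1 - θ)) * (n : ℝ) * μ ∧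
    eucNorm (pdd * wdd) ≤ (2 * (1 + θ) ^ 2 / (1 - θ) ^ 3) * (n : ℝ) ^ 2 * μ ∧
    eucNorm (pdd * wd)
      ≤ (2 * Real.sqrt 2 * (1 + θ) ^ ((3 : ℝ) / 2) / (1 - θ) ^ 2)
          * (n : ℝ) ^ ((3 : ℝ) / 2) * μ ∧
    eucNorm (pd * wdd)
      ≤ (2 * Real.sqrt 2 * (1 + θ) ^ ((3 : ℝ) / 2) / (1 - θ) ^ 2)
          * (n : ℝ) ^ ((3 : ℝ) / 2) * μ := by
  obtain ⟨hθ0, hθ1⟩ := hθ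
  subst hp hw hpd hwd hpdd hwdd
  obtain ⟨hp, hw⟩ := hN.elim_pos
  have : Nonempty (Fin n) := ⟨⟨0, hn⟩⟩
  have hμ0 : 0 < μ := hμ ▸ div_pos (dotp_pos hp hw) (by positivity)
  have hS : dotp (Sum.elim y z) (Sum.elim lam gam) = 2 * n * μ := by
    rw [hμ]
    field_simp
  have hθ' : 0 < 1 - θ := sub_pos.2 hθ1
  obtain ⟨h1, h2, h3, h4⟩ := arc_derivative_bounds hp hw (mul_pos hθ' hμ0)
    (fun i => hμ ▸ hN.le_mul i) hfd.newton (hfd.dotp_nonneg hH.posSemidef) hsd.newton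
    (hsd.dotp_nonneg hH.posSemidef)
  rw [hS] at h1 h2 h3 h4
  refine ⟨?_, ?_, le_three_halves_bound (eucNorm_nonneg _) n.cast_nonneg hμ0 hθ0.le hθ1 h3,
    le_three_halves_bound (eucNorm_nonneg _) n.cast_nonneg hμ0 hθ0.le hθ1 h4⟩
  · calc _ ≤ n * μ := h1.trans_eq (by ring)
      _ ≤ n * μ * ((1 + θ) / (1 - θ)) ^ 1 :=
          le_mul_one_add_div_one_sub_pow (by positivity) hθ0.le hθ1 1
      _ = _ := by ring
  · calc _ ≤ 2 * n ^ 2 * μ / (1 - θ) := h2.trans_eq (by field_simp)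
      _ ≤ 2 * n ^ 2 * μ / (1 - θ) * ((1 + θ) / (1 - θ)) ^ 2 :=
          le_mul_one_add_div_one_sub_pow (div_nonneg (by positivity) hθ'.le) hθ0.le hθ1 2
      _ = _ := by field_simp

end
end
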